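/- Let C ⊆ E be nonempty and convex, let P : E → E satisfy P z ∈ C and ⟨z − P z, c − P z⟩ ≤ 0 for all z ∈ E and c ∈ C (metric projection onto C). Let F : E → E be L-Lipschitz, suppose S := F + N_C is ρ-comonotone, and let z⋆ ∈ C with −F z⋆ ∈ N_C(z⋆). Let γ satisfy max{0, −2ρ} < γ ≤ 1/L, set H := id − γF, and let α ∈ (0, 1) with α < 1 + 2ρ/γ. Consider the CEG+ iteration: z̄^k = P(H z^k), z^{k+1} = z^k − α(H z^k − H z̄^k). Then for every K ≥ 1: (1/K) Σ_{k=0}^{K−1} ‖H z^k − H z̄^k‖² ≤ ‖z^0 − z⋆‖² / (α(1 + 2ρ/γ − α)K). Since (H z^k − H z̄^k)/γ ∈ S(z̄^k), this yields (1/K) Σ_{k=0}^{K−1} dist(0, S z̄^k)² ≤ ‖z^0 − z⋆‖² / (αγ²(1 + 2ρ/γ − α)K). -/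

import Mathlib

/-!
Write `r_k := H z^k − H z̄^k`. Since `z̄^k` is the projection of `H z^k`, the vector `r_k / γ`
lies in `S z̄^k`, and `0 ∈ S z⋆`; comonotonicity of `S` therefore gives
`⟪r_k, z̄^k − z⋆⟫ ≥ (ρ/γ) ‖r_k‖²`. As `γ ≤ 1/L`, the map `γF` is nonexpansive, which makes
`H = id − γF` `1/2`-cocoercive: `⟪r_k, z^k − z̄^k⟫ ≥ ‖r_k‖²/2`. Adding the two,
`⟪r_k, z^k − z⋆⟫ ≥ (1/2 + ρ/γ) ‖r_k‖²`, and expanding the update yields the Fejér-type descent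
`‖z^{k+1} − z⋆‖² ≤ ‖z^k − z⋆‖² − α (1 + 2ρ/γ − α) ‖r_k‖²`, which telescopes.
-/

open InnerProductSpace Finset

section Estimates

variable {E : Type*} [NormedAddCommGroup E] [InnerProductSpace ℝ E]

theorem half_norm_sub_sq_le_inner_of_norm_le {a b : E} (h : ‖b‖ ≤ ‖a‖) :
    ‖a - b‖ ^ 2 / 2 ≤ ⟪a - b, a⟫_ℝ := by
  have hsq : ‖b‖ ^ 2 ≤ ‖a‖ ^ 2 := pow_le_pow_left₀ (norm_nonneg b) h 2
  rw [norm_sub_sq_real, inner_sub_left, real_inner_self_eq_norm_sq, real_inner_comm]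
  linarith

theorem half_norm_sq_le_inner_of_lipschitz {F H : E → E} {L γ : ℝ} (hγ : 0 ≤ γ)
    (hγL : γ * L ≤ 1) (hF : ∀ z z' : E, ‖F z - F z'‖ ≤ L * ‖z - z'‖)
    (hH : ∀ z, H z = z - γ • F z) (w w' : E) :
    ‖H w - H w'‖ ^ 2 / 2 ≤ ⟪H w - H w', w - w'⟫_ℝ := by
  have hdiff : H w - H w' = (w - w') - γ • (F w - F w') := by
    rw [hH, hH, smul_sub]; abel
  have hnonexp : ‖γ • (F w - F w')‖ ≤ ‖w - w'‖ :=
    calc ‖γ • (F w - F w')‖ = γ * ‖F w - F w'‖ := by rw [norm_smul, Real.norm_of_nonneg hγ]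
      _ ≤ γ * (L * ‖w - w'‖) := mul_le_mul_of_nonneg_left (hF w w') hγ
      _ = (γ * L) * ‖w - w'‖ := by ring
      _ ≤ ‖w - w'‖ := mul_le_of_le_one_left (norm_nonneg _) hγL
  rw [hdiff]
  exact half_norm_sub_sq_le_inner_of_norm_le hnonexp

theorem div_mul_norm_sq_le_inner_of_inv_smul {r x : E} {ρ γ : ℝ} (hγ : 0 < γ)
    (h : ρ * ‖γ⁻¹ • r‖ ^ 2 ≤ ⟪γ⁻¹ • r, x⟫_ℝ) :
    ρ / γ * ‖r‖ ^ 2 ≤ ⟪r, x⟫_ℝ := by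
  rw [real_inner_smul_left, norm_smul, Real.norm_of_nonneg (inv_nonneg.mpr hγ.le), mul_pow]
    at h
  have h' := mul_le_mul_of_nonneg_left h hγ.le
  field_simp at h' ⊢
  linarith

theorem norm_sub_smul_sq_le {r x : E} {c α : ℝ} (hα : 0 ≤ α) (h : c * ‖r‖ ^ 2 ≤ ⟪r, x⟫_ℝ) :
    ‖x - α • r‖ ^ 2 ≤ ‖x‖ ^ 2 - α * (2 * c - α) * ‖r‖ ^ 2 := by
  rw [norm_sub_sq_real, real_inner_smul_right, norm_smul, Real.norm_of_nonneg hα, mul_pow,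
    real_inner_comm]
  nlinarith [mul_le_mul_of_nonneg_left h hα]

theorem norm_sub_smul_sub_sq_le_of_inner {w wbar zstar r : E} {ρ γ α : ℝ} (hα : 0 ≤ α)
    (hcomon : ρ / γ * ‖r‖ ^ 2 ≤ ⟪r, wbar - zstar⟫_ℝ) (hcocoer : ‖r‖ ^ 2 / 2 ≤ ⟪r, w - wbar⟫_ℝ) :
    ‖w - α • r - zstar‖ ^ 2 ≤ ‖w - zstar‖ ^ 2 - α * (1 + 2 * ρ / γ - α) * ‖r‖ ^ 2 := by
  have hinner : (1 / 2 + ρ / γ) * ‖r‖ ^ 2 ≤ ⟪r, w - zstar⟫_ℝ := by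
    rw [← sub_add_sub_cancel w wbar, inner_add_right]
    linarith
  convert norm_sub_smul_sq_le hα hinner using 3
  · rw [sub_right_comm]
  · ring

theorem sq_mul_infDist_zero_sq_le {r : E} {s : Set E} {γ : ℝ} (hγ : 0 < γ) (h : γ⁻¹ • r ∈ s) :
    γ ^ 2 * Metric.infDist 0 s ^ 2 ≤ ‖r‖ ^ 2 := by
  have hdist := Metric.infDist_le_dist_of_mem (x := 0) h
  rw [dist_zero_left, norm_smul, Real.norm_of_nonneg (inv_nonneg.mpr hγ.le),
    ← div_eq_inv_mul, le_div_iff₀' hγ] at hdist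
  rw [← mul_pow]
  exact pow_le_pow_left₀ (mul_nonneg hγ.le Metric.infDist_nonneg) hdist 2

theorem inv_smul_sub_mem_of_proj {C : Set E} {P F H : E → E} {S : E → Set E} {γ : ℝ}
    (hγ : 0 < γ) (hPmem : ∀ z, P z ∈ C) (hPproj : ∀ z : E, ∀ c ∈ C, ⟪z - P z, c - P z⟫_ℝ ≤ 0)
    (hSdef : ∀ zz : E, S zz =
      {v | zz ∈ C ∧ ∃ u, (∀ c ∈ C, ⟪u, c - zz⟫_ℝ ≤ 0) ∧ v = F zz + u})
    (hH : ∀ z, H z = z - γ • F z) (x : E) :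
    γ⁻¹ • (x - H (P x)) ∈ S (P x) := by
  rw [hSdef]
  refine ⟨hPmem x, γ⁻¹ • (x - P x), fun c hc => ?_, ?_⟩
  · rw [real_inner_smul_left]
    exact mul_nonpos_of_nonneg_of_nonpos (inv_nonneg.mpr hγ.le) (hPproj x c hc)
  · rw [hH, sub_sub_eq_add_sub, add_sub_right_comm, smul_add, inv_smul_smul₀ hγ.ne', add_comm]

end Estimates

theorem mul_sum_range_le_of_le_sub {a b : ℕ → ℝ} {B : ℝ} (ha : ∀ k, 0 ≤ a k)
    (h : ∀ k, a (k + 1) ≤ a k - B * b k) (K : ℕ) :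
    B * ∑ k ∈ range K, b k ≤ a 0 := by
  suffices a K + B * ∑ k ∈ range K, b k ≤ a 0 by linarith [ha K]
  induction K with
  | zero => simp
  | succ n ih => rw [sum_range_succ, mul_add]; linarith [h n]

theorem one_div_mul_le_div_mul_of_mul_le {s D B K : ℝ} (hB : 0 < B) (hK : 0 < K)
    (h : B * s ≤ D) : 1 / K * s ≤ D / (B * K) := by
  rw [le_div_iff₀ (mul_pos hB hK)]
  calc 1 / K * s * (B * K) = B * s := by field_simp
    _ ≤ D := h

theorem stmt16_general {E : Type*} [NormedAddCommGroup E] [InnerProductSpace ℝ E]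
    (C : Set E) (P : E → E) (hPmem : ∀ z, P z ∈ C)
    (hPproj : ∀ z : E, ∀ c ∈ C, ⟪z - P z, c - P z⟫_ℝ ≤ 0)
    (F : E → E) (L ρ γ α : ℝ) (hL : 0 < L)
    (hF : ∀ z z' : E, ‖F z - F z'‖ ≤ L * ‖z - z'‖)
    (S : E → Set E)
    (hSdef : ∀ zz : E, S zz =
      {v | zz ∈ C ∧ ∃ u, (∀ c ∈ C, ⟪u, c - zz⟫_ℝ ≤ 0) ∧ v = F zz + u})
    (hS : ∀ z z' v v' : E, v ∈ S z → v' ∈ S z' →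
      ⟪v - v', z - z'⟫_ℝ ≥ ρ * ‖v - v'‖^2)
    (zstar : E) (hzC : zstar ∈ C)
    (hzstar : ∀ c ∈ C, ⟪-F zstar, c - zstar⟫_ℝ ≤ 0)
    (hγ : max 0 (-(2 * ρ)) < γ) (hγL : γ ≤ 1 / L)
    (hα0 : 0 < α) (hαρ : α < 1 + 2 * ρ / γ)
    (H : E → E) (hH : ∀ zz, H zz = zz - γ • F zz)
    (z zbar : ℕ → E)
    (hzbar : ∀ k, zbar k = P (H (z k)))
    (hz : ∀ k, z (k + 1) = z k - α • (H (z k) - H (zbar k))) :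
    ∀ K : ℕ, 1 ≤ K →
      ((1 / (K : ℝ)) * ∑ k ∈ Finset.range K, ‖H (z k) - H (zbar k)‖^2 ≤
          ‖z 0 - zstar‖^2 / (α * (1 + 2 * ρ / γ - α) * K)) ∧
      ((1 / (K : ℝ)) * ∑ k ∈ Finset.range K,
            (Metric.infDist (0 : E) (S (zbar k)))^2 ≤
          ‖z 0 - zstar‖^2 / (α * γ^2 * (1 + 2 * ρ / γ - α) * K)) := by
  intro K hK
  have hγ0 : 0 < γ := (le_max_left _ _).trans_lt hγ
  have hB : 0 < α * (1 + 2 * ρ / γ - α) := mul_pos hα0 (by linarith)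
  have hres : ∀ k, γ⁻¹ • (H (z k) - H (zbar k)) ∈ S (zbar k) := fun k => by
    rw [hzbar]; exact inv_smul_sub_mem_of_proj hγ0 hPmem hPproj hSdef hH _
  have h0S : (0 : E) ∈ S zstar := by rw [hSdef]; exact ⟨hzC, -F zstar, hzstar, by simp⟩
  have hstep : ∀ k, ‖z (k + 1) - zstar‖ ^ 2 ≤
      ‖z k - zstar‖ ^ 2 - α * (1 + 2 * ρ / γ - α) * ‖H (z k) - H (zbar k)‖ ^ 2 := fun k => by
    rw [hz]
    exact norm_sub_smul_sub_sq_le_of_inner hα0.le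
      (div_mul_norm_sq_le_inner_of_inv_smul hγ0 (by simpa using hS _ _ _ 0 (hres k) h0S))
      (half_norm_sq_le_inner_of_lipschitz hγ0.le ((le_div_iff₀ hL).mp hγL) hF hH _ _)
  have hsum := mul_sum_range_le_of_le_sub (a := fun k => ‖z k - zstar‖ ^ 2)
    (fun _ => sq_nonneg _) hstep K
  have hK0 : (0 : ℝ) < K := by exact_mod_cast hK
  refine ⟨one_div_mul_le_div_mul_of_mul_le hB hK0 hsum,
    one_div_mul_le_div_mul_of_mul_le (by positivity) hK0 ?_⟩
  calc α * γ ^ 2 * (1 + 2 * ρ / γ - α) * ∑ k ∈ range K, Metric.infDist 0 (S (zbar k)) ^ 2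
      = α * (1 + 2 * ρ / γ - α) * ∑ k ∈ range K, γ ^ 2 * Metric.infDist 0 (S (zbar k)) ^ 2 := by
        rw [← mul_sum]; ring
    _ ≤ α * (1 + 2 * ρ / γ - α) * ∑ k ∈ range K, ‖H (z k) - H (zbar k)‖ ^ 2 := by
        gcongr with k; exact sq_mul_infDist_zero_sq_le hγ0 (hres k)
    _ ≤ _ := hsum

/-- average rate of the constrained CEG+ iteration on the
operator residual: with `max{0, −2ρ} < γ ≤ 1/L`, `α ∈ (0,1)`,
`α < 1 + 2ρ/γ`, for every `K ≥ 1`: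
`(1/K) Σ_{k<K} ‖H z^k − H z̄^k‖² ≤ ‖z^0 − z⋆‖²/(α(1 + 2ρ/γ − α)K)` and
`(1/K) Σ_{k<K} dist(0, S z̄^k)² ≤ ‖z^0 − z⋆‖²/(αγ²(1 + 2ρ/γ − α)K)`. -/
theorem stmt16 {E : Type*} [NormedAddCommGroup E] [InnerProductSpace ℝ E]
    (C : Set E) (hCne : C.Nonempty) (hCconv : Convex ℝ C)
    (P : E → E) (hPmem : ∀ z, P z ∈ C)
    (hPproj : ∀ z : E, ∀ c ∈ C, ⟪z - P z, c - P z⟫_ℝ ≤ 0)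
    (F : E → E) (L ρ γ α : ℝ) (hL : 0 < L)
    (hF : ∀ z z' : E, ‖F z - F z'‖ ≤ L * ‖z - z'‖)
    (S : E → Set E)
    (hSdef : ∀ zz : E, S zz =
      {v | zz ∈ C ∧ ∃ u, (∀ c ∈ C, ⟪u, c - zz⟫_ℝ ≤ 0) ∧ v = F zz + u})
    (hS : ∀ z z' v v' : E, v ∈ S z → v' ∈ S z' →
      ⟪v - v', z - z'⟫_ℝ ≥ ρ * ‖v - v'‖^2)
    (zstar : E) (hzC : zstar ∈ C)
    (hzstar : ∀ c ∈ C, ⟪-F zstar, c - zstar⟫_ℝ ≤ 0)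
    (hγ : max 0 (-(2 * ρ)) < γ) (hγL : γ ≤ 1 / L)
    (hα0 : 0 < α) (hα1 : α < 1) (hαρ : α < 1 + 2 * ρ / γ)
    (H : E → E) (hH : ∀ zz, H zz = zz - γ • F zz)
    (z zbar : ℕ → E)
    (hzbar : ∀ k, zbar k = P (H (z k)))
    (hz : ∀ k, z (k + 1) = z k - α • (H (z k) - H (zbar k))) :
    ∀ K : ℕ, 1 ≤ K →
      ((1 / (K : ℝ)) * ∑ k ∈ Finset.range K, ‖H (z k) - H (zbar k)‖^2 ≤
          ‖z 0 - zstar‖^2 / (α * (1 + 2 * ρ / γ - α) * K)) ∧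
      ((1 / (K : ℝ)) * ∑ k ∈ Finset.range K,
            (Metric.infDist (0 : E) (S (zbar k)))^2 ≤
          ‖z 0 - zstar‖^2 / (α * γ^2 * (1 + 2 * ρ / γ - α) * K)) :=
  stmt16_general C P hPmem hPproj F L ρ γ α hL hF S hSdef hS zstar hzC hzstar hγ hγL hα0 hαρ H hH z
    zbar hzbar hz
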